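/- Let A be a process whose program counter is inside the repeat loop of the quasi rendezvous protocol and let B be a neighbour of A. From any configuration, every execution eventually reaches a configuration in which either B allows A to write, or A has exited the repeat loop. -/

import Mathlib

/-!
An operational model of the quasi rendezvous protocol of Johnen, Lavallée, Lavault.

Each process `A` owns, for each neighbour `B_i`, a register `Write_{AB_i}` and two
one-bit registers `Control_{AB_i}` and `CheckControl_{AB_i}`; communication is under
read/write atomicity.
-/

structure Network where
  Proc : Type
  deg : Proc → ℕ
  deg_pos : ∀ p, 0 < deg p
  nbr : (p : Proc) → Fin (deg p) → Proc
  nbr_ne : ∀ p i, nbr p i ≠ p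
  nbr_inj : ∀ p, Function.Injective (nbr p)
  nbr_symm : ∀ p i, ∃ j, nbr (nbr p i) j = p

namespace QR

open Classical

/-- Program counter of a process with `n` neighbours running the quasi rendezvous
protocol.  `wr i k` : writing phase, neighbour `i`, sub-action `k`
(`k = 0`: `write(Write_{AB_i}, get_i)`, `k = 1`: `c_i ← read(Control_{AB_i})`,
`k = 2`: `write(Control_{AB_i}, (c_i+1) mod 2)`);
`lp i k` : repeat loop, neighbour `i`, sub-action `k`
(`k = 0`: `b_i ← read(Control_{B_iA})`, `k = 1`: `d_i ← read(CheckControl_{AB_i})`,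
then if `b_i ≠ d_i` continue with `k = 2`: `r_i ← read(Write_{B_iA})` and
`k = 3`: `write(CheckControl_{AB_i}, b_i)`, else jump to `k = 4`;
`k = 4`: `c_i ← read(Control_{AB_i})`, `k = 5`: `l_i ← read(CheckControl_{B_iA})`,
followed, after the last neighbour, by the (local) exit test `∀ i, c_i = l_i`). -/
inductive PC (n : ℕ) : Type
  | wr : Fin n → Fin 3 → PC n
  | lp : Fin n → Fin 6 → PC n

/-- An atomic action (read/write atomicity); `A B` names the owner and the direction
of the register, e.g. `readC A B` is a read of `Control_{AB}` and `writeCC A B b`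
writes the bit `b` into `CheckControl_{AB}`. -/
inductive Act (Proc Val : Type) : Type
  | readW : Proc → Proc → Act Proc Val
  | writeW : Proc → Proc → Val → Act Proc Val
  | readC : Proc → Proc → Act Proc Val
  | writeC : Proc → Proc → Bool → Act Proc Val
  | readCC : Proc → Proc → Act Proc Val
  | writeCC : Proc → Proc → Bool → Act Proc Val

/-- A configuration: register contents and local states (pc and local variables
`r_i`, `b_i`, `d_i`, `c_i`, `l_i`). -/
structure Config (Net : Network) (Val : Type) : Type where
  regW : Net.Proc → Net.Proc → Val
  regC : Net.Proc → Net.Proc → Bool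
  regCC : Net.Proc → Net.Proc → Bool
  pc : (p : Net.Proc) → PC (Net.deg p)
  rv : (p : Net.Proc) → Fin (Net.deg p) → Val
  bv : (p : Net.Proc) → Fin (Net.deg p) → Bool
  dv : (p : Net.Proc) → Fin (Net.deg p) → Bool
  cv : (p : Net.Proc) → Fin (Net.deg p) → Bool
  lv : (p : Net.Proc) → Fin (Net.deg p) → Bool

def finSucc? {n : ℕ} (i : Fin n) : Option (Fin n) :=
  if h : i.1 + 1 < n then some ⟨i.1 + 1, h⟩ else none

noncomputable def upd2 {Proc : Type} {β : Type} (f : Proc → Proc → β) (a b : Proc) (v : β) :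
    Proc → Proc → β :=
  fun x y => if x = a ∧ y = b then v else f x y

/-- One atomic step of process `p`, labelled by the action performed.  The value
written by `write(Write_{AB_i}, get_i)` is arbitrary (`get_i` is an arbitrary helper
function returning the next message). -/
inductive Step (Net : Network) (Val : Type) :
    Config Net Val → Net.Proc → Act Net.Proc Val → Config Net Val → Prop
  | writeW (c : Config Net Val) (p : Net.Proc) (i : Fin (Net.deg p)) (v : Val)
      (h : c.pc p = .wr i 0) :
      Step Net Val c p (.writeW p (Net.nbr p i) v)
        { c with
          regW := upd2 c.regW p (Net.nbr p i) v
          pc := Function.update c.pc p (PC.wr i 1) }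
  | readOwnC (c : Config Net Val) (p : Net.Proc) (i : Fin (Net.deg p))
      (h : c.pc p = .wr i 1) :
      Step Net Val c p (.readC p (Net.nbr p i))
        { c with
          cv := Function.update c.cv p (Function.update (c.cv p) i (c.regC p (Net.nbr p i)))
          pc := Function.update c.pc p (PC.wr i 2) }
  | writeOwnC (c : Config Net Val) (p : Net.Proc) (i : Fin (Net.deg p))
      (h : c.pc p = .wr i 2) :
      Step Net Val c p (.writeC p (Net.nbr p i) (!(c.cv p i)))
        { c with
          regC := upd2 c.regC p (Net.nbr p i) (!(c.cv p i))
          pc := Function.update c.pc p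
            (match finSucc? i with
             | some j => PC.wr j 0
             | none => PC.lp ⟨0, Net.deg_pos p⟩ 0) }
  | readNbrC (c : Config Net Val) (p : Net.Proc) (i : Fin (Net.deg p))
      (h : c.pc p = .lp i 0) :
      Step Net Val c p (.readC (Net.nbr p i) p)
        { c with
          bv := Function.update c.bv p (Function.update (c.bv p) i (c.regC (Net.nbr p i) p))
          pc := Function.update c.pc p (PC.lp i 1) }
  | readOwnCC (c : Config Net Val) (p : Net.Proc) (i : Fin (Net.deg p))
      (h : c.pc p = .lp i 1) :
      Step Net Val c p (.readCC p (Net.nbr p i))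
        { c with
          dv := Function.update c.dv p
            (Function.update (c.dv p) i (c.regCC p (Net.nbr p i)))
          pc := Function.update c.pc p
            (if c.bv p i ≠ c.regCC p (Net.nbr p i) then PC.lp i 2 else PC.lp i 4) }
  | readNbrW (c : Config Net Val) (p : Net.Proc) (i : Fin (Net.deg p))
      (h : c.pc p = .lp i 2) :
      Step Net Val c p (.readW (Net.nbr p i) p)
        { c with
          rv := Function.update c.rv p (Function.update (c.rv p) i (c.regW (Net.nbr p i) p))
          pc := Function.update c.pc p (PC.lp i 3) }
  | writeOwnCC (c : Config Net Val) (p : Net.Proc) (i : Fin (Net.deg p))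
      (h : c.pc p = .lp i 3) :
      Step Net Val c p (.writeCC p (Net.nbr p i) (c.bv p i))
        { c with
          regCC := upd2 c.regCC p (Net.nbr p i) (c.bv p i)
          pc := Function.update c.pc p (PC.lp i 4) }
  | readOwnC' (c : Config Net Val) (p : Net.Proc) (i : Fin (Net.deg p))
      (h : c.pc p = .lp i 4) :
      Step Net Val c p (.readC p (Net.nbr p i))
        { c with
          cv := Function.update c.cv p (Function.update (c.cv p) i (c.regC p (Net.nbr p i)))
          pc := Function.update c.pc p (PC.lp i 5) }
  | readNbrCC (c : Config Net Val) (p : Net.Proc) (i : Fin (Net.deg p))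
      (h : c.pc p = .lp i 5) :
      Step Net Val c p (.readCC (Net.nbr p i) p)
        { c with
          lv := Function.update c.lv p (Function.update (c.lv p) i (c.regCC (Net.nbr p i) p))
          pc := Function.update c.pc p
            (match finSucc? i with
             | some j => PC.lp j 0
             | none =>
               if ∀ j, c.cv p j = Function.update (c.lv p) i (c.regCC (Net.nbr p i) p) j
               then PC.wr ⟨0, Net.deg_pos p⟩ 0
               else PC.lp ⟨0, Net.deg_pos p⟩ 0) }

/-- An execution: an infinite sequence of configurations, starting from an arbitrary
configuration, where at instant `t` the scheduled process performs one atomic action. -/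
structure Exec (Net : Network) (Val : Type) : Type where
  cfg : ℕ → Config Net Val
  sched : ℕ → Net.Proc
  act : ℕ → Act Net.Proc Val
  step : ∀ t, Step Net Val (cfg t) (sched t) (act t) (cfg (t + 1))

def Enabled {Net : Network} {Val : Type} (c : Config Net Val) (p : Net.Proc) : Prop :=
  ∃ a c', Step Net Val c p a c'

/-- Fair scheduler: any process that can continuously perform an action eventually
performs one. -/
def Exec.Fair {Net : Network} {Val : Type} (e : Exec Net Val) : Prop :=
  ∀ p t, (∀ u, t ≤ u → Enabled (e.cfg u) p) → ∃ u, t ≤ u ∧ e.sched u = p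

/-- The program counter of `p` is inside the repeat loop. -/
def InLoop {Net : Network} {Val : Type} (c : Config Net Val) (p : Net.Proc) : Prop :=
  ∃ i k, c.pc p = PC.lp i k

/-- In the quasi rendezvous protocol, `B` allows `A` to write iff
`CheckControl_{BA} = Control_{AB}`. -/
def Allows {Net : Network} {Val : Type} (c : Config Net Val) (B A : Net.Proc) : Prop :=
  c.regCC B A = c.regC A B

/-- `B` is a neighbour of `A`. -/
def Neighbour (Net : Network) (A B : Net.Proc) : Prop := ∃ i, Net.nbr A i = B

/-- At instant `t`, process `A` writes (some value) into its register `Write_{AB}`. -/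
def WritesW {Net : Network} {Val : Type} (e : Exec Net Val) (A B : Net.Proc) (t : ℕ) : Prop :=
  e.sched t = A ∧ ∃ v, e.act t = Act.writeW A B v

/-- At instant `t`, process `B` reads from the register `Write_{AB}` of its neighbour `A`. -/
def ReadsW {Net : Network} {Val : Type} (e : Exec Net Val) (A B : Net.Proc) (t : ℕ) : Prop :=
  e.sched t = B ∧ e.act t = Act.readW A B

/-- Process `P` has executed (at least) its first three atomic actions before
instant `t`. -/
def DidThree {Net : Network} {Val : Type} (e : Exec Net Val) (P : Net.Proc) (t : ℕ) : Prop :=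
  ∃ u1 u2 u3, u1 < u2 ∧ u2 < u3 ∧ u3 < t ∧
    e.sched u1 = P ∧ e.sched u2 = P ∧ e.sched u3 = P

/-- `A` performs a full (complete) writing of `Write_{AB}` at instants
`t1 < t2 < t3` (with no other action of `A` in between): the sequence
`write(Write_{AB}, get)`; `c ← read(Control_{AB})`;
`write(Control_{AB}, (c+1) mod 2)`. -/
def FullWriting {Net : Network} {Val : Type} (e : Exec Net Val) (A B : Net.Proc)
    (t1 t2 t3 : ℕ) : Prop :=
  t1 < t2 ∧ t2 < t3 ∧
  e.sched t1 = A ∧ e.sched t2 = A ∧ e.sched t3 = A ∧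
  (∃ v, e.act t1 = Act.writeW A B v) ∧
  e.act t2 = Act.readC A B ∧
  e.act t3 = Act.writeC A B (!(e.cfg t2).regC A B) ∧
  (∀ u, t1 < u → u < t3 → u ≠ t2 → e.sched u ≠ A)

end QR

/-!
While `A` stays in its repeat loop it never writes `Control_{AB}`, so that register keeps one
value. Every process is always enabled, so fairness schedules `B` infinitely often, and each
step of `B` moves its program counter forward along a cycle of `9 · deg B` program points;
hence `B` reaches the point where it reads `Control_{AB}` into `b`. Its next steps either find
`CheckControl_{BA}` already equal to `b` or copy `b` into `CheckControl_{BA}`; either way `B`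
then allows `A` to write.
-/

namespace QR

open Classical

variable {Net : Network} {Val : Type}

theorem Neighbour.symm {A B : Net.Proc} (h : Neighbour Net A B) : Neighbour Net B A := by
  obtain ⟨i, rfl⟩ := h
  exact Net.nbr_symm A i

theorem Config.enabled (c : Config Net Val) (p : Net.Proc) : Enabled c p := by
  rcases h : c.pc p with ⟨i, k⟩ | ⟨i, k⟩
  · fin_cases k
    · exact ⟨_, _, Step.writeW c p i (c.rv p i) h⟩
    · exact ⟨_, _, Step.readOwnC c p i h⟩
    · exact ⟨_, _, Step.writeOwnC c p i h⟩
  · fin_cases k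
    · exact ⟨_, _, Step.readNbrC c p i h⟩
    · exact ⟨_, _, Step.readOwnCC c p i h⟩
    · exact ⟨_, _, Step.readNbrW c p i h⟩
    · exact ⟨_, _, Step.writeOwnCC c p i h⟩
    · exact ⟨_, _, Step.readOwnC' c p i h⟩
    · exact ⟨_, _, Step.readNbrCC c p i h⟩

/-- Index of a program point in the cyclic order `lp 0 0, …, lp (n-1) 5, wr 0 0, …, wr (n-1) 2`,
which every step follows (possibly skipping points). -/
def PC.position {n : ℕ} : PC n → ℕ
  | .lp i k => 6 * i + k
  | .wr i k => 6 * n + 3 * i + k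

def PC.stepsTo {n : ℕ} (J : Fin n) (q : PC n) : ℕ :=
  if q.position ≤ 6 * J then 6 * J - q.position else 6 * J + 9 * n - q.position

namespace Step

variable {c c' : Config Net Val} {p : Net.Proc} {a : Act Net.Proc Val}

theorem pc_of_ne (hst : Step Net Val c p a c') {q : Net.Proc} (hq : q ≠ p) :
    c'.pc q = c.pc q := by
  cases hst <;> simp [Function.update_of_ne hq]

theorem bv_of_ne (hst : Step Net Val c p a c') {q : Net.Proc} (hq : q ≠ p) :
    c'.bv q = c.bv q := by
  cases hst <;> simp [Function.update_of_ne hq]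

theorem regC_of_inLoop (hst : Step Net Val c p a c') {A : Net.Proc} (hA : InLoop c A)
    (B : Net.Proc) : c'.regC A B = c.regC A B := by
  obtain ⟨i, k, hi⟩ := hA
  cases hst with
  | writeOwnC j h =>
    simp only [upd2]
    split_ifs with hpA
    · obtain ⟨rfl, -⟩ := hpA
      simp [hi] at h
    · rfl
  | _ => rfl

theorem stepsTo_lt (hst : Step Net Val c p a c') {J : Fin (Net.deg p)}
    (hJ : c.pc p ≠ .lp J 0) : (c'.pc p).stepsTo J < (c.pc p).stepsTo J := by
  cases hst <;> rename_i h <;>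
    simp only [h, Function.update_self, PC.stepsTo, PC.position, finSucc?] at hJ ⊢ <;> grind

variable {J : Fin (Net.deg p)}

theorem lp_zero (hst : Step Net Val c p a c') (hpc : c.pc p = .lp J 0) :
    c'.pc p = .lp J 1 ∧ c'.bv p J = c.regC (Net.nbr p J) p := by
  cases hst <;> simp_all

theorem lp_one (hst : Step Net Val c p a c') (hpc : c.pc p = .lp J 1) :
    c.bv p J = c.regCC p (Net.nbr p J) ∨ (c'.pc p = .lp J 2 ∧ c'.bv p = c.bv p) := by
  cases hst <;> simp_all [_root_.em]

theorem lp_two (hst : Step Net Val c p a c') (hpc : c.pc p = .lp J 2) :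
    c'.pc p = .lp J 3 ∧ c'.bv p = c.bv p := by
  cases hst <;> simp_all

theorem lp_three (hst : Step Net Val c p a c') (hpc : c.pc p = .lp J 3) :
    c'.regCC p (Net.nbr p J) = c.bv p J := by
  cases hst <;> simp_all [upd2]

end Step

namespace Exec

variable (e : Exec Net Val)

theorem step_of_sched_eq {p : Net.Proc} {u : ℕ} (hp : e.sched u = p) :
    Step Net Val (e.cfg u) p (e.act u) (e.cfg (u + 1)) :=
  hp ▸ e.step u

theorem regC_eq_of_inLoop {A : Net.Proc} {t : ℕ} (hA : ∀ u, t ≤ u → InLoop (e.cfg u) A)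
    (B : Net.Proc) {u : ℕ} (htu : t ≤ u) : (e.cfg u).regC A B = (e.cfg t).regC A B := by
  induction u, htu using Nat.le_induction with
  | base => rfl
  | succ u htu ih => rw [(e.step u).regC_of_inLoop (hA u htu), ih]

theorem pc_bv_eq_of_not_sched {p : Net.Proc} {s u : ℕ} (hsu : s ≤ u)
    (hidle : ∀ v, s ≤ v → v < u → e.sched v ≠ p) :
    (e.cfg u).pc p = (e.cfg s).pc p ∧ (e.cfg u).bv p = (e.cfg s).bv p := by
  induction u, hsu using Nat.le_induction with
  | base => exact ⟨rfl, rfl⟩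
  | succ u hsu ih =>
    have hne : p ≠ e.sched u := (hidle u hsu u.lt_succ_self).symm
    obtain ⟨hpc, hbv⟩ := ih fun v hsv hvu => hidle v hsv (hvu.trans u.lt_succ_self)
    exact ⟨((e.step u).pc_of_ne hne).trans hpc, ((e.step u).bv_of_ne hne).trans hbv⟩

variable {e}

namespace Fair

theorem exists_next_sched (hfair : e.Fair) (p : Net.Proc) (s : ℕ) :
    ∃ u, s ≤ u ∧ e.sched u = p ∧
      (e.cfg u).pc p = (e.cfg s).pc p ∧ (e.cfg u).bv p = (e.cfg s).bv p := by
  have hsched : ∃ u, s ≤ u ∧ e.sched u = p := hfair p s fun u _ => (e.cfg u).enabled p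
  obtain ⟨hsu, hp⟩ := Nat.find_spec hsched
  refine ⟨Nat.find hsched, hsu, hp, e.pc_bv_eq_of_not_sched hsu ?_⟩
  exact fun v hsv hv hvp => Nat.find_min hsched hv ⟨hsv, hvp⟩

theorem exists_sched_pc_eq_lp_zero (hfair : e.Fair) (p : Net.Proc) (J : Fin (Net.deg p))
    (s : ℕ) : ∃ u, s ≤ u ∧ e.sched u = p ∧ (e.cfg u).pc p = .lp J 0 := by
  suffices h : ∀ m s, ((e.cfg s).pc p).stepsTo J = m →
      ∃ u, s ≤ u ∧ e.sched u = p ∧ (e.cfg u).pc p = .lp J 0 from h _ s rfl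
  intro m
  induction m using Nat.strong_induction_on with
  | _ m ih =>
    intro s hm
    obtain ⟨u, hsu, hp, hpc, -⟩ := hfair.exists_next_sched p s
    by_cases hJ : (e.cfg u).pc p = .lp J 0
    · exact ⟨u, hsu, hp, hJ⟩
    have hlt := (e.step_of_sched_eq hp).stepsTo_lt hJ
    rw [hpc, hm] at hlt
    obtain ⟨w, huw, hw⟩ := ih _ hlt (u + 1) rfl
    exact ⟨w, by omega, hw⟩

theorem exists_regCC_eq_of_pc_eq_lp_two (hfair : e.Fair) {p : Net.Proc} {J : Fin (Net.deg p)}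
    {s : ℕ} (hpc : (e.cfg s).pc p = .lp J 2) :
    ∃ u, s ≤ u ∧ (e.cfg u).regCC p (Net.nbr p J) = (e.cfg s).bv p J := by
  obtain ⟨u, hsu, hp, hpcu, hbvu⟩ := hfair.exists_next_sched p s
  obtain ⟨hpc', hbv'⟩ := (e.step_of_sched_eq hp).lp_two (hpcu.trans hpc)
  obtain ⟨w, huw, hpw, hpcw, hbvw⟩ := hfair.exists_next_sched p (u + 1)
  refine ⟨w + 1, by omega, ?_⟩
  rw [(e.step_of_sched_eq hpw).lp_three (hpcw.trans hpc'), hbvw, hbv', hbvu]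

theorem exists_regCC_eq_of_pc_eq_lp_one (hfair : e.Fair) {p : Net.Proc} {J : Fin (Net.deg p)}
    {s : ℕ} (hpc : (e.cfg s).pc p = .lp J 1) :
    ∃ u, s ≤ u ∧ (e.cfg u).regCC p (Net.nbr p J) = (e.cfg s).bv p J := by
  obtain ⟨u, hsu, hp, hpcu, hbvu⟩ := hfair.exists_next_sched p s
  rcases (e.step_of_sched_eq hp).lp_one (hpcu.trans hpc) with hsame | ⟨hpc', hbv'⟩
  · exact ⟨u, hsu, by rw [← hsame, hbvu]⟩
  · obtain ⟨w, huw, hw⟩ := hfair.exists_regCC_eq_of_pc_eq_lp_two hpc'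
    exact ⟨w, by omega, by rw [hw, hbv', hbvu]⟩

theorem exists_allows_of_regC_eq (hfair : e.Fair) {A B : Net.Proc} (hBA : Neighbour Net B A)
    {t : ℕ} (hC : ∀ u, t ≤ u → (e.cfg u).regC A B = (e.cfg t).regC A B) :
    ∃ u, t ≤ u ∧ Allows (e.cfg u) B A := by
  obtain ⟨J, rfl⟩ := hBA
  obtain ⟨s, hts, hB, hpc⟩ := hfair.exists_sched_pc_eq_lp_zero B J t
  obtain ⟨hpc', hbv'⟩ := (e.step_of_sched_eq hB).lp_zero hpc
  obtain ⟨u, hsu, hu⟩ := hfair.exists_regCC_eq_of_pc_eq_lp_one hpc'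
  refine ⟨u, by omega, ?_⟩
  rw [Allows, hu, hbv', hC s hts, hC u (by omega)]

end Fair

end Exec

end QR

open QR in
theorem quasi_rendezvous_eventually_allowed_or_exit_general (Net : Network) (Val : Type)
    (e : Exec Net Val) (hfair : e.Fair) (A B : Net.Proc) (hAB : Neighbour Net A B)
    (t : ℕ) :
    ∃ u, t ≤ u ∧ (Allows (e.cfg u) B A ∨ ¬ InLoop (e.cfg u) A) := by
  by_contra! hstuck
  obtain ⟨u, htu, hallows⟩ := hfair.exists_allows_of_regC_eq hAB.symm
    fun u => e.regC_eq_of_inLoop (fun v hv => (hstuck v hv).2) B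
  exact (hstuck u htu).1 hallows

open QR in
/-- Let `A` be a process whose program counter is inside the repeat
loop of the quasi rendezvous protocol and let `B` be a neighbour of `A`.  From any
configuration, every (fair) execution eventually reaches a configuration in which
either `B` allows `A` to write (`CheckControl_{BA} = Control_{AB}`), or `A` has
exited the repeat loop. -/
theorem quasi_rendezvous_eventually_allowed_or_exit (Net : Network) (Val : Type)
    (e : Exec Net Val) (hfair : e.Fair) (A B : Net.Proc) (hAB : Neighbour Net A B)
    (t : ℕ) (hloop : InLoop (e.cfg t) A) :
    ∃ u, t ≤ u ∧ (Allows (e.cfg u) B A ∨ ¬ InLoop (e.cfg u) A) :=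
  quasi_rendezvous_eventually_allowed_or_exit_general Net Val e hfair A B hAB t
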